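/- Triangle inequality for the Hilbert–Schmidt distance: for N×N unitaries U, U', U'', Δ(U,U'') ≤ Δ(U,U') + Δ(U',U''), where Δ(A,B) := sqrt(1 - |Tr(A†B)|²/N²). -/

import Mathlib

/-!
Seen as vectors `u = frobeniusVec U` of the Frobenius inner product space, matrices satisfy
`⟪u, v⟫ = Tr (Uᴴ V)`, and `‖u‖² = N` for `U` unitary. Hence `hsDist U V` is
`√(1 - |⟪u, v⟫|² / (‖u‖² ‖v‖²))`, the sine of the Fubini–Study angle between `u` and `v`, and it
suffices to show that this sine is subadditive for unit vectors `x, y, z`. Removing from `x` and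
`z` their components along `y`, Cauchy–Schwarz gives
`|⟪x, z⟫| ≥ |⟪x, y⟫| |⟪y, z⟫| - sin θ_xy sin θ_yz = cos (θ_xy + θ_yz)`, hence
`sin θ_xz ≤ sin θ_xy + sin θ_yz`.
-/

open scoped Matrix

noncomputable def hsDist {N : ℕ} (U V : Matrix (Fin N) (Fin N) ℂ) : ℝ :=
  Real.sqrt (1 - ‖(Uᴴ * V).trace‖ ^ 2 / (N : ℝ) ^ 2)

open scoped InnerProductSpace
open RCLike

theorem one_sub_sq_le_add_sq_of_mul_sub_mul_le {a b s t c : ℝ} (ha : 0 ≤ a) (hb : 0 ≤ b)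
    (hs : 0 ≤ s) (ht : 0 ≤ t) (has : a ^ 2 + s ^ 2 = 1) (hbt : b ^ 2 + t ^ 2 = 1)
    (hc : a * b - s * t ≤ c) : 1 - c ^ 2 ≤ (s + t) ^ 2 := by
  rcases le_or_gt (a * b) (s * t) with hle | hlt
  · -- then `a² + b² ≤ 1`, i.e. `s² + t² ≥ 1`
    have : a ^ 2 * b ^ 2 ≤ s ^ 2 * t ^ 2 := by
      rw [← mul_pow, ← mul_pow]; exact pow_le_pow_left₀ (by positivity) hle 2
    nlinarith [mul_nonneg hs ht, sq_nonneg c]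
  · have hc2 : (a * b - s * t) ^ 2 ≤ c ^ 2 := pow_le_pow_left₀ (by linarith) hc 2
    have ha1 : a ≤ 1 := by nlinarith
    have hb1 : b ≤ 1 := by nlinarith
    have hsum : a * t + b * s ≤ s + t := by
      nlinarith [mul_le_of_le_one_left ht ha1, mul_le_of_le_one_left hs hb1]
    calc 1 - c ^ 2 ≤ 1 - (a * b - s * t) ^ 2 := by linarith
      _ = (a * t + b * s) ^ 2 := by linear_combination -(b ^ 2 + t ^ 2) * has - hbt
      _ ≤ (s + t) ^ 2 := pow_le_pow_left₀ (by positivity) hsum 2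

section InnerProductSpace

variable {𝕜 E : Type*} [RCLike 𝕜] [NormedAddCommGroup E] [InnerProductSpace 𝕜 E]

theorem inner_sub_inner_smul_sub_inner_smul {y : E} (hy : ‖y‖ = 1) (x z : E) :
    ⟪x - ⟪y, x⟫_𝕜 • y, z - ⟪y, z⟫_𝕜 • y⟫_𝕜 = ⟪x, z⟫_𝕜 - ⟪x, y⟫_𝕜 * ⟪y, z⟫_𝕜 := by
  simp only [inner_sub_left, inner_sub_right, inner_smul_left, inner_smul_right,
    inner_conj_symm, inner_self_eq_one_of_norm_eq_one hy]
  ring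

theorem norm_sub_inner_smul_sq {y : E} (hy : ‖y‖ = 1) (x : E) :
    ‖x - ⟪y, x⟫_𝕜 • y‖ ^ 2 = ‖x‖ ^ 2 - ‖⟪x, y⟫_𝕜‖ ^ 2 := by
  have h := congrArg (re : 𝕜 → ℝ) (inner_sub_inner_smul_sub_inner_smul hy x x)
  have hsq : ⟪x, y⟫_𝕜 * ⟪y, x⟫_𝕜 = (‖⟪x, y⟫_𝕜‖ ^ 2 : ℝ) := by
    rw [← inner_conj_symm y x, mul_conj, ofReal_pow]
  rwa [inner_self_eq_norm_sq, map_sub, inner_self_eq_norm_sq, hsq, ofReal_re] at h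

theorem sqrt_one_sub_norm_inner_sq_le_add {x y z : E} (hx : ‖x‖ = 1) (hy : ‖y‖ = 1)
    (hz : ‖z‖ = 1) :
    √(1 - ‖⟪x, z⟫_𝕜‖ ^ 2) ≤ √(1 - ‖⟪x, y⟫_𝕜‖ ^ 2) + √(1 - ‖⟪y, z⟫_𝕜‖ ^ 2) := by
  set x' := x - ⟪y, x⟫_𝕜 • y
  set z' := z - ⟪y, z⟫_𝕜 • y
  have hx' : ‖⟪x, y⟫_𝕜‖ ^ 2 + ‖x'‖ ^ 2 = 1 := by
    rw [norm_sub_inner_smul_sq hy, hx]; ring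
  have hz' : ‖⟪y, z⟫_𝕜‖ ^ 2 + ‖z'‖ ^ 2 = 1 := by
    rw [norm_sub_inner_smul_sq hy, hz, ← norm_conj, inner_conj_symm]; ring
  have hcos : ‖⟪x, y⟫_𝕜‖ * ‖⟪y, z⟫_𝕜‖ - ‖x'‖ * ‖z'‖ ≤ ‖⟪x, z⟫_𝕜‖ := by
    have hcs : ‖⟪x, z⟫_𝕜 - ⟪x, y⟫_𝕜 * ⟪y, z⟫_𝕜‖ ≤ ‖x'‖ * ‖z'‖ := by
      rw [← inner_sub_inner_smul_sub_inner_smul hy]; exact norm_inner_le_norm x' z'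
    have := norm_sub_norm_le (⟪x, y⟫_𝕜 * ⟪y, z⟫_𝕜) ⟪x, z⟫_𝕜
    rw [norm_sub_rev, norm_mul] at this
    linarith
  rw [← eq_sub_iff_add_eq'.2 hx', ← eq_sub_iff_add_eq'.2 hz', Real.sqrt_sq (norm_nonneg _),
    Real.sqrt_sq (norm_nonneg _), Real.sqrt_le_iff]
  exact ⟨by positivity, one_sub_sq_le_add_sq_of_mul_sub_mul_le (norm_nonneg _) (norm_nonneg _)
    (norm_nonneg _) (norm_nonneg _) hx' hz' hcos⟩

theorem norm_inner_smul_inv_norm_sq (x z : E) :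
    ‖⟪(‖x‖⁻¹ : 𝕜) • x, (‖z‖⁻¹ : 𝕜) • z⟫_𝕜‖ ^ 2 = ‖⟪x, z⟫_𝕜‖ ^ 2 / (‖x‖ ^ 2 * ‖z‖ ^ 2) := by
  simp only [inner_smul_left, inner_smul_right, norm_mul, norm_conj, norm_inv, norm_ofReal,
    abs_norm]
  ring

theorem sqrt_one_sub_norm_inner_sq_div_le_add (x y z : E) :
    √(1 - ‖⟪x, z⟫_𝕜‖ ^ 2 / (‖x‖ ^ 2 * ‖z‖ ^ 2)) ≤
      √(1 - ‖⟪x, y⟫_𝕜‖ ^ 2 / (‖x‖ ^ 2 * ‖y‖ ^ 2)) +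
        √(1 - ‖⟪y, z⟫_𝕜‖ ^ 2 / (‖y‖ ^ 2 * ‖z‖ ^ 2)) := by
  -- by `0 / 0 = 0`, a zero vector is at sine `1` from every vector
  rcases eq_or_ne x 0 with rfl | hx
  · simp
  rcases eq_or_ne y 0 with rfl | hy
  · have : √(1 - ‖⟪x, z⟫_𝕜‖ ^ 2 / (‖x‖ ^ 2 * ‖z‖ ^ 2)) ≤ 1 :=
      Real.sqrt_le_one.2 (sub_le_self _ (by positivity))
    norm_num
    linarith
  rcases eq_or_ne z 0 with rfl | hz
  · simp
  simp only [← norm_inner_smul_inv_norm_sq]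
  exact sqrt_one_sub_norm_inner_sq_le_add (norm_smul_inv_norm hx) (norm_smul_inv_norm hy)
    (norm_smul_inv_norm hz)

end InnerProductSpace

namespace Matrix

variable {m n 𝕜 : Type*} [Fintype m] [Fintype n] [RCLike 𝕜]

noncomputable def frobeniusVec (A : Matrix m n 𝕜) : EuclideanSpace 𝕜 (m × n) :=
  WithLp.toLp 2 fun p => A p.1 p.2

theorem inner_frobeniusVec (A B : Matrix m n 𝕜) :
    ⟪frobeniusVec A, frobeniusVec B⟫_𝕜 = (Aᴴ * B).trace := by
  simp only [frobeniusVec, PiLp.inner_apply, RCLike.inner_apply, trace,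
    diag_apply, mul_apply, conjTranspose_apply, Fintype.sum_prod_type]
  rw [Finset.sum_comm]
  simp only [mul_comm, RCLike.star_def]

theorem norm_frobeniusVec_sq_of_mem_unitaryGroup [DecidableEq n] {U : Matrix n n 𝕜}
    (hU : U ∈ unitaryGroup n 𝕜) : ‖frobeniusVec U‖ ^ 2 = Fintype.card n := by
  rw [← inner_self_eq_norm_sq (𝕜 := 𝕜), inner_frobeniusVec, ← star_eq_conjTranspose,
    (mem_unitaryGroup_iff').1 hU, trace_one, natCast_re]

end Matrix

open Matrix in
theorem hsDist_eq_of_mem_unitaryGroup {N : ℕ} {U V : Matrix (Fin N) (Fin N) ℂ}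
    (hU : U ∈ unitaryGroup (Fin N) ℂ) (hV : V ∈ unitaryGroup (Fin N) ℂ) :
    hsDist U V = √(1 - ‖⟪frobeniusVec U, frobeniusVec V⟫_ℂ‖ ^ 2 /
      (‖frobeniusVec U‖ ^ 2 * ‖frobeniusVec V‖ ^ 2)) := by
  rw [hsDist, inner_frobeniusVec, norm_frobeniusVec_sq_of_mem_unitaryGroup hU,
    norm_frobeniusVec_sq_of_mem_unitaryGroup hV, Fintype.card_fin, ← sq]

theorem hsDist_triangle (N : ℕ) (U U' U'' : Matrix (Fin N) (Fin N) ℂ)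
    (hU : U ∈ Matrix.unitaryGroup (Fin N) ℂ)
    (hU' : U' ∈ Matrix.unitaryGroup (Fin N) ℂ)
    (hU'' : U'' ∈ Matrix.unitaryGroup (Fin N) ℂ) :
    hsDist U U'' ≤ hsDist U U' + hsDist U' U'' := by
  rw [hsDist_eq_of_mem_unitaryGroup hU hU'', hsDist_eq_of_mem_unitaryGroup hU hU',
    hsDist_eq_of_mem_unitaryGroup hU' hU'']
  exact sqrt_one_sub_norm_inner_sq_div_le_add _ _ _
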